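/- arXiv:2309.16563 — 4 statements merged into one kernel-verified Lean document; each statement's English description precedes it below -/
import Mathlib

section
/- For any ε ∈ (0, 1/2) and Δ > 0, there exists a unique c > 0 satisfying 1/(1-ε) = c·Φ(Δ₋/2) + Φ(Δ₊/2), where Δ₊ = Δ + (2/Δ)·log(1/c), Δ₋ = Δ - (2/Δ)·log(1/c), and Φ is the standard Gaussian CDF. Uniqueness follows because the map c ↦ c·Φ(Δ₋/2) + Φ(Δ₊/2) is strictly increasing in c. -/
open MeasureTheory ProbabilityTheory Real Set
open scoped ENNReal

noncomputable section

/-- Standard normal probability density function. -/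
def stdphi (x : ℝ) : ℝ := (Real.sqrt (2 * Real.pi))⁻¹ * Real.exp (-x ^ 2 / 2)

/-- Standard normal cumulative distribution function. -/
def stdPhi (x : ℝ) : ℝ := ((gaussianReal 0 1) (Set.Iic x)).toReal

/-- Standard normal quantile function. -/
def stdPhiInv (p : ℝ) : ℝ := sInf {x : ℝ | p ≤ stdPhi x}

/-- Minimum distinction gap under corruption, `Δ_min = 2 Φ⁻¹(1/(2(1-ε)))`. -/
def Dmin (ε : ℝ) : ℝ := 2 * stdPhiInv (1 / (2 * (1 - ε)))

/-- `ε`-corrupted mixture `(1-ε) μ + ε H` of two measures on `ℝ`. -/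
def mix (ε : ℝ) (μ H : Measure ℝ) : Measure ℝ :=
  ENNReal.ofReal (1 - ε) • μ + ENNReal.ofReal ε • H

open Classical in
/-- Kullback–Leibler divergence. -/
def KLdiv (P Q : Measure ℝ) : ℝ≥0∞ :=
  if P ≪ Q ∧ Integrable (fun x => Real.log (P.rnDeriv Q x).toReal) P then
    ENNReal.ofReal (∫ x, Real.log (P.rnDeriv Q x).toReal ∂P) else ⊤

/-- Corrupted Gaussian divergence `kl^ε_G(x, y)`: the infimum over pairs of corruption
distributions of the KL divergence between the corrupted unit-variance Gaussians. -/
def klG (ε x y : ℝ) : ℝ≥0∞ :=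
  ⨅ (H : Measure ℝ) (_ : IsProbabilityMeasure H) (H' : Measure ℝ)
    (_ : IsProbabilityMeasure H'),
    KLdiv (mix ε (gaussianReal x 1) H) (mix ε (gaussianReal y 1) H')

/-- (Lower) median of a probability measure on `ℝ`. -/
def measMed (μ : Measure ℝ) : ℝ := sInf {x : ℝ | 1 / 2 ≤ (μ (Set.Iic x)).toReal}

/-- Quantile function of a probability measure on `ℝ`. -/
def quantile (μ : Measure ℝ) (p : ℝ) : ℝ := sInf {x : ℝ | p ≤ (μ (Set.Iic x)).toReal}

/-- Empirical median of a finite sample. -/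
def empMed {n : ℕ} (X : Fin n → ℝ) : ℝ :=
  sInf {x : ℝ | (n : ℝ) ≤ 2 * Nat.card {i : Fin n // X i ≤ x}}

/-- The variance proxy `s_ε` for the concentration of the median under corruption. -/
def sEps (ε : ℝ) : ℝ :=
  (Real.sqrt (ε / 2 / Real.log (1 / (1 - 2 * ε))) +
      Real.sqrt ((1 - 2 * ε) / (4 * Real.log ((1 - ε) / ε)))) /
    ((1 - ε) * stdphi (Dmin ε / 2 + 1))

/-- Mean of a measure on `ℝ`. -/
def meanOf (μ : Measure ℝ) : ℝ := ∫ x, x ∂μ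

/-- Corrupted KL-inf `KL^ε_inf(η, x; L)`. -/
def KLinf (ε : ℝ) (η : Measure ℝ) (x : ℝ) (L : Set (Measure ℝ)) : ℝ≥0∞ :=
  ⨅ (κ : Measure ℝ) (_ : κ ∈ L) (_ : x ≤ meanOf κ) (H : Measure ℝ)
    (_ : IsProbabilityMeasure H) (H' : Measure ℝ) (_ : IsProbabilityMeasure H'),
    KLdiv (mix ε η H) (mix ε κ H')

/-!
Put `t = log c`. Then `Δ₋/2 = Δ/2 + t/Δ` and `Δ₊/2 = Δ/2 - t/Δ`, so the right-hand side
becomes `g t = eᵗ Φ(Δ/2 + t/Δ) + Φ(Δ/2 - t/Δ)`. The Gaussian likelihood ratio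
`eᵗ φ(Δ/2 + t/Δ) = φ(Δ/2 - t/Δ)` makes the two density terms of `g'` cancel, leaving
`g' t = eᵗ Φ(Δ/2 + t/Δ) > 0`. Since `g t < eᵗ + 1` and `g t → ∞`, the strictly increasing
continuous `g` takes the value `1/(1-ε) > 1` exactly once.
-/

open Filter

lemma stdphi_eq_gaussianPDFReal : stdphi = gaussianPDFReal 0 1 := by
  ext x
  simp [stdphi, gaussianPDFReal]

lemma stdphi_pos (x : ℝ) : 0 < stdphi x := by
  rw [stdphi_eq_gaussianPDFReal]
  exact gaussianPDFReal_pos _ _ _ one_ne_zero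

lemma continuous_stdphi : Continuous stdphi := by
  unfold stdphi
  fun_prop

lemma integrable_stdphi : Integrable stdphi := by
  rw [stdphi_eq_gaussianPDFReal]
  exact integrable_gaussianPDFReal 0 1

/-- The Gaussian likelihood ratio between `N(a, 1)` and `N(-a, 1)` at `b` is `exp (2ab)`. -/
lemma exp_mul_stdphi_add (a b : ℝ) : exp (2 * a * b) * stdphi (a + b) = stdphi (a - b) := by
  unfold stdphi
  rw [mul_left_comm, ← exp_add]
  ring_nf

lemma stdPhi_eq_integral (x : ℝ) : stdPhi x = ∫ t in Iic x, stdphi t := by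
  rw [stdPhi, gaussianReal_apply_eq_integral 0 one_ne_zero, ENNReal.toReal_ofReal,
    stdphi_eq_gaussianPDFReal]
  exact setIntegral_nonneg measurableSet_Iic fun t _ => gaussianPDFReal_nonneg 0 1 t

lemma hasDerivAt_stdPhi (x : ℝ) : HasDerivAt stdPhi (stdphi x) x := by
  have hΦ : stdPhi = fun u => stdPhi 0 + ∫ t in (0 : ℝ)..u, stdphi t := by
    ext u
    rw [stdPhi_eq_integral, stdPhi_eq_integral, intervalIntegral.integral_Iic_sub_Iic
      integrable_stdphi.integrableOn integrable_stdphi.integrableOn |>.symm]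
    ring
  rw [hΦ]
  exact (intervalIntegral.integral_hasDerivAt_right integrable_stdphi.intervalIntegrable
    continuous_stdphi.aestronglyMeasurable.stronglyMeasurableAtFilter
    continuous_stdphi.continuousAt).const_add _

lemma strictMono_stdPhi : StrictMono stdPhi :=
  strictMono_of_hasDerivAt_pos hasDerivAt_stdPhi stdphi_pos

lemma stdPhi_pos (x : ℝ) : 0 < stdPhi x :=
  ENNReal.toReal_nonneg.trans_lt (strictMono_stdPhi (sub_one_lt x))

lemma stdPhi_lt_one (x : ℝ) : stdPhi x < 1 :=
  (strictMono_stdPhi (lt_add_one x)).trans_le measureReal_le_one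

def normalisationProfile (Δ t : ℝ) : ℝ :=
  exp t * stdPhi (Δ / 2 + t / Δ) + stdPhi (Δ / 2 - t / Δ)

section normalisationProfile

variable {Δ : ℝ}

lemma normalisationProfile_log (Δ : ℝ) {c : ℝ} (hc : 0 < c) :
    normalisationProfile Δ (log c) =
      c * stdPhi ((Δ - 2 / Δ * log (1 / c)) / 2) + stdPhi ((Δ + 2 / Δ * log (1 / c)) / 2) := by
  rw [normalisationProfile, exp_log hc, one_div, log_inv]
  ring_nf

lemma hasDerivAt_normalisationProfile (hΔ : Δ ≠ 0) (t : ℝ) :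
    HasDerivAt (normalisationProfile Δ) (exp t * stdPhi (Δ / 2 + t / Δ)) t := by
  have hratio : exp t * stdphi (Δ / 2 + t / Δ) = stdphi (Δ / 2 - t / Δ) := by
    rw [← exp_mul_stdphi_add]
    field_simp
  have hplus := (hasDerivAt_stdPhi (Δ / 2 + t / Δ)).comp t
    (((hasDerivAt_id t).div_const Δ).const_add (Δ / 2))
  have hminus := (hasDerivAt_stdPhi (Δ / 2 - t / Δ)).comp t
    (((hasDerivAt_id t).div_const Δ).const_sub (Δ / 2))
  refine (((hasDerivAt_exp t).mul hplus).add hminus).congr_deriv ?_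
  rw [← hratio, Function.comp_apply, id]
  ring

lemma strictMono_normalisationProfile (hΔ : Δ ≠ 0) : StrictMono (normalisationProfile Δ) :=
  strictMono_of_hasDerivAt_pos (hasDerivAt_normalisationProfile hΔ) fun t =>
    mul_pos (exp_pos t) (stdPhi_pos _)

lemma continuous_normalisationProfile (hΔ : Δ ≠ 0) : Continuous (normalisationProfile Δ) :=
  continuous_iff_continuousAt.2 fun t => (hasDerivAt_normalisationProfile hΔ t).continuousAt

lemma normalisationProfile_lt_exp_add_one (Δ t : ℝ) : normalisationProfile Δ t < exp t + 1 :=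
  add_lt_add_of_le_of_lt (mul_le_of_le_one_right (exp_pos t).le (stdPhi_lt_one _).le)
    (stdPhi_lt_one _)

lemma tendsto_normalisationProfile_atTop (hΔ : 0 < Δ) :
    Tendsto (normalisationProfile Δ) atTop atTop := by
  refine tendsto_atTop_mono' _ ?_ (tendsto_exp_atTop.atTop_mul_const (stdPhi_pos (Δ / 2)))
  filter_upwards [eventually_ge_atTop 0] with t ht
  have hΦ : stdPhi (Δ / 2) ≤ stdPhi (Δ / 2 + t / Δ) :=
    strictMono_stdPhi.monotone (le_add_of_nonneg_right (div_nonneg ht hΔ.le))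
  calc exp t * stdPhi (Δ / 2) ≤ exp t * stdPhi (Δ / 2 + t / Δ) :=
        mul_le_mul_of_nonneg_left hΦ (exp_pos t).le
    _ ≤ normalisationProfile Δ t := le_add_of_nonneg_right (stdPhi_pos _).le

lemma existsUnique_normalisationProfile_eq (hΔ : 0 < Δ) {L : ℝ} (hL : 1 < L) :
    ∃! t, normalisationProfile Δ t = L := by
  have hbelow : normalisationProfile Δ (log (L - 1)) ≤ L := by
    have := normalisationProfile_lt_exp_add_one Δ (log (L - 1))
    rw [exp_log (by linarith)] at this
    linarith
  obtain ⟨t, ht⟩ := mem_range_of_exists_le_of_exists_ge (continuous_normalisationProfile hΔ.ne')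
    ⟨_, hbelow⟩ ((tendsto_normalisationProfile_atTop hΔ).eventually_ge_atTop L).exists
  exact ⟨t, ht, fun s hs => (strictMono_normalisationProfile hΔ.ne').injective (hs.trans ht.symm)⟩

end normalisationProfile

/-- existence and uniqueness of the normalisation constant `c`. -/
theorem exists_unique_normalisation_constant (ε Δ : ℝ) (hε : ε ∈ Set.Ioo (0 : ℝ) (1 / 2))
    (hΔ : 0 < Δ) :
    ∃! c : ℝ, 0 < c ∧
      1 / (1 - ε) =
        c * stdPhi ((Δ - 2 / Δ * Real.log (1 / c)) / 2) +
          stdPhi ((Δ + 2 / Δ * Real.log (1 / c)) / 2) := by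
  have hL : 1 < 1 / (1 - ε) := by
    rw [lt_div_iff₀ (by linarith [hε.2])]
    linarith [hε.1]
  obtain ⟨t, ht, huniq⟩ := existsUnique_normalisationProfile_eq hΔ hL
  refine ⟨exp t, ⟨exp_pos t, ?_⟩, ?_⟩
  · rw [← normalisationProfile_log Δ (exp_pos t), log_exp, ht]
  · rintro c ⟨hc, hcL⟩
    rw [← normalisationProfile_log Δ hc] at hcL
    rw [← huniq (log c) hcL.symm, exp_log hc]
end
end

section
/- Let ε ∈ (0,1/2), and suppose |m(κ) - m(η)| ≤ 2·Φ⁻¹(1/(2(1-ε))) for two unit-variance Gaussian distributions κ = N(m(κ),1) and η = N(m(η),1). Then there exist probability distributions H₁, H₂ on ℝ such that (1-ε)κ + ε·H₁ = (1-ε)η + ε·H₂, i.e., the ε-corruption neighbourhoods of κ and η intersect. -/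
/-!
Write `μ, ν` for the two Gaussians and `t = ‖(ν - μ)⁺‖ = ‖(μ - ν)⁺‖`, so that
`μ + (ν - μ)⁺ = ν + (μ - ν)⁺ = μ ⊔ ν`. With `c = (1 - ε) / ε`, the corruptions
`H₁ = c (ν - μ)⁺ + (1 - c t) μ` and `H₂ = c (μ - ν)⁺ + (1 - c t) μ` turn both mixtures into
`(1 - ε) (μ ⊔ ν) + ε (1 - c t) μ`; they are probability measures as soon as `c t ≤ 1`.
For unit-variance Gaussians the densities cross at the midpoint of the means, which gives
`t = 2 Φ(|m(κ) - m(η)| / 2) - 1`, and `c t ≤ 1` is exactly `Φ(|m(κ) - m(η)| / 2) ≤ 1 / (2 (1 - ε))`,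
which the hypothesis gives by continuity of `Φ`.
-/

open MeasureTheory ProbabilityTheory Real Set
open scoped ENNReal

noncomputable section

namespace MeasureTheory.Measure

variable {α : Type*} [MeasurableSpace α] {μ ν : Measure α}

lemma add_sub_eq_add_sub_of_le [IsFiniteMeasure μ] (h : μ ≤ ν) : μ + (ν - μ) = ν + (μ - ν) := by
  rw [sub_eq_zero_of_le h, add_zero, add_comm, sub_add_cancel_of_le h]

lemma add_sub_eq_add_sub [IsFiniteMeasure μ] [IsFiniteMeasure ν] :
    μ + (ν - μ) = ν + (μ - ν) := by
  obtain ⟨s, hs⟩ := exists_isHahnDecomposition μ ν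
  rw [← restrict_add_restrict_compl (μ := μ + (ν - μ)) hs.measurableSet,
    ← restrict_add_restrict_compl (μ := ν + (μ - ν)) hs.measurableSet]
  simp only [restrict_add, restrict_sub_eq_restrict_sub_restrict hs.measurableSet,
    restrict_sub_eq_restrict_sub_restrict hs.measurableSet.compl]
  rw [add_sub_eq_add_sub_of_le hs.le_on, add_sub_eq_add_sub_of_le hs.ge_on_compl]

lemma sub_apply_univ_comm [IsFiniteMeasure μ] [IsFiniteMeasure ν] (h : μ univ = ν univ) :
    (ν - μ) univ = (μ - ν) univ := by
  have := congrArg (· univ) (add_sub_eq_add_sub (μ := μ) (ν := ν))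
  simp only [add_apply, h] at this
  exact (ENNReal.add_right_inj (measure_ne_top ν univ)).1 this

lemma sub_apply_univ_of_isHahnDecomposition [IsFiniteMeasure μ] {s : Set α}
    (hs : IsHahnDecomposition ν μ s) : (ν - μ) univ = ν sᶜ - μ sᶜ := by
  rw [← restrict_add_restrict_compl (μ := ν - μ) hs.measurableSet, add_apply,
    restrict_sub_eq_restrict_sub_restrict hs.measurableSet,
    restrict_sub_eq_restrict_sub_restrict hs.measurableSet.compl, sub_eq_zero_of_le hs.le_on,
    coe_zero, Pi.zero_apply, zero_add, sub_apply MeasurableSet.univ hs.ge_on_compl,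
    restrict_apply_univ, restrict_apply_univ]

end MeasureTheory.Measure

theorem exists_smul_add_smul_eq_of_sub_univ_le {α : Type*} [MeasurableSpace α] {μ ν : Measure α}
    [IsProbabilityMeasure μ] [IsProbabilityMeasure ν] {ε : ℝ} (hε : 0 < ε)
    (h : (1 - ε) * ((ν - μ) univ).toReal ≤ ε) :
    ∃ H₁ H₂ : Measure α, IsProbabilityMeasure H₁ ∧ IsProbabilityMeasure H₂ ∧
      ENNReal.ofReal (1 - ε) • μ + ENNReal.ofReal ε • H₁ =
        ENNReal.ofReal (1 - ε) • ν + ENNReal.ofReal ε • H₂ := by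
  set t := (ν - μ) univ
  set c := ENNReal.ofReal ((1 - ε) / ε)
  have hεc : ENNReal.ofReal ε * c = ENNReal.ofReal (1 - ε) := by
    rw [← ENNReal.ofReal_mul hε.le, mul_div_cancel₀ _ hε.ne']
  have hct : c * t ≤ 1 := by
    rw [← ENNReal.ofReal_toReal (a := t) (measure_ne_top _ _),
      ← ENNReal.ofReal_mul' ENNReal.toReal_nonneg, ← ENNReal.ofReal_one, div_mul_eq_mul_div]
    exact ENNReal.ofReal_le_ofReal ((div_le_one hε).2 h)
  let H (ρ : Measure α) := c • ρ + (1 - c * t) • μ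
  have hH (ρ : Measure α) (hρ : ρ univ = t) : IsProbabilityMeasure (H ρ) :=
    ⟨by simp [H, hρ, add_tsub_cancel_of_le hct]⟩
  have hmix (ρ ρ' : Measure α) : ENNReal.ofReal (1 - ε) • ρ + ENNReal.ofReal ε • H ρ' =
      ENNReal.ofReal (1 - ε) • (ρ + ρ') + (ENNReal.ofReal ε * (1 - c * t)) • μ := by
    simp only [H, smul_add, smul_smul, hεc, add_assoc]
  refine ⟨H (ν - μ), H (μ - ν), hH _ rfl, hH _ (Measure.sub_apply_univ_comm (by simp)).symm, ?_⟩
  rw [hmix, hmix, Measure.add_sub_eq_add_sub]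

namespace ProbabilityTheory

lemma continuous_cdf (μ : Measure ℝ) [IsProbabilityMeasure μ]
    [NullSingletonClass μ] : Continuous (cdf μ) := by
  refine continuous_iff_continuousAt.2 fun x ↦ ?_
  rw [(monotone_cdf μ).continuousAt_iff_leftLim_eq_rightLim, StieltjesFunction.rightLim_eq]
  have h := (cdf μ).measure_singleton x
  rw [measure_cdf, measure_singleton, eq_comm, ENNReal.ofReal_eq_zero, sub_nonpos] at h
  exact le_antisymm ((monotone_cdf μ).leftLim_le le_rfl) h

lemma gaussianPDFReal_le_gaussianPDFReal {m m' x : ℝ} (v : NNReal)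
    (h : (x - m') ^ 2 ≤ (x - m) ^ 2) : gaussianPDFReal m v x ≤ gaussianPDFReal m' v x := by
  rw [gaussianPDFReal, gaussianPDFReal]
  gcongr

lemma gaussianReal_restrict_le_restrict {m m' : ℝ} {v : NNReal} (hv : v ≠ 0)
    {s : Set ℝ} (hs : MeasurableSet s) (h : ∀ x ∈ s, (x - m') ^ 2 ≤ (x - m) ^ 2) :
    (gaussianReal m v).restrict s ≤ (gaussianReal m' v).restrict s := by
  rw [gaussianReal_of_var_ne_zero _ hv, gaussianReal_of_var_ne_zero _ hv, restrict_withDensity hs,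
    restrict_withDensity hs]
  refine withDensity_mono ((ae_restrict_iff' hs).2 (ae_of_all _ fun x hx ↦ ?_))
  exact ENNReal.ofReal_le_ofReal (gaussianPDFReal_le_gaussianPDFReal v (h x hx))

end ProbabilityTheory

lemma stdPhi_eq_cdf : stdPhi = cdf (gaussianReal 0 1) := by
  ext x
  rw [cdf_eq_real]
  rfl

lemma monotone_stdPhi : Monotone stdPhi :=
  stdPhi_eq_cdf ▸ monotone_cdf _

lemma continuous_stdPhi : Continuous stdPhi := by
  have := nullSingletonClass_gaussianReal (μ := 0) one_ne_zero
  rw [stdPhi_eq_cdf]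
  exact continuous_cdf _

lemma stdPhi_neg (x : ℝ) : stdPhi (-x) = 1 - stdPhi x := by
  have := nullSingletonClass_gaussianReal (μ := 0) one_ne_zero
  have hsymm : (gaussianReal 0 1).map (fun y ↦ -y) = gaussianReal 0 1 := by
    rw [gaussianReal_map_neg, neg_zero]
  change (gaussianReal 0 1).real _ = 1 - (gaussianReal 0 1).real _
  have hpre : (fun y : ℝ ↦ -y) ⁻¹' Iic (-x) = (Iio x)ᶜ := by ext; simp
  rw [← hsymm, map_measureReal_apply measurable_neg measurableSet_Iic, hsymm, hpre,
    probReal_compl_eq_one_sub measurableSet_Iio, measureReal_congr Iio_ae_eq_Iic]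

lemma stdPhi_zero : stdPhi 0 = 1 / 2 := by
  linarith [neg_zero (G := ℝ) ▸ stdPhi_neg 0]

lemma gaussianReal_real_Iic (m x : ℝ) : (gaussianReal m 1).real (Iic x) = stdPhi (x - m) := by
  have hshift : (gaussianReal 0 1).map (· + m) = gaussianReal m 1 := by
    rw [gaussianReal_map_add_const, zero_add]
  rw [← hshift, map_measureReal_apply (measurable_add_const m) measurableSet_Iic,
    Set.preimage_add_const_Iic]
  rfl

lemma stdPhi_le_of_le_stdPhiInv {p x : ℝ} (hp : 1 / 2 < p) (hx : x ≤ stdPhiInv p) :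
    stdPhi x ≤ p := by
  have hbdd : BddBelow {z | p ≤ stdPhi z} := by
    refine ⟨0, fun z hz ↦ le_of_not_ge fun hz0 ↦ ?_⟩
    linarith [stdPhi_zero ▸ monotone_stdPhi hz0, hz.out]
  by_contra! hpx
  obtain ⟨z, hzx, hpz⟩ := ((continuous_stdPhi.tendsto x).eventually (lt_mem_nhds hpx)).exists_lt
  exact hzx.not_ge (hx.trans (csInf_le hbdd hpz.le))

lemma toReal_gaussianReal_sub_gaussianReal_of_le {a b : ℝ} (hab : a ≤ b) :
    ((gaussianReal b 1 - gaussianReal a 1) univ).toReal = 2 * stdPhi ((b - a) / 2) - 1 := by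
  have hs : IsHahnDecomposition (gaussianReal b 1) (gaussianReal a 1) (Iic ((a + b) / 2)) :=
    ⟨measurableSet_Iic,
      gaussianReal_restrict_le_restrict one_ne_zero measurableSet_Iic fun x hx ↦ by
        nlinarith [hx.out],
      gaussianReal_restrict_le_restrict one_ne_zero measurableSet_Iic.compl fun x hx ↦ by
        nlinarith [notMem_Iic.1 hx]⟩
  have hle : gaussianReal a 1 (Iic ((a + b) / 2))ᶜ ≤ gaussianReal b 1 (Iic ((a + b) / 2))ᶜ := by
    simpa using Measure.le_iff'.1 hs.ge_on_compl univ
  rw [Measure.sub_apply_univ_of_isHahnDecomposition hs, ENNReal.toReal_sub_of_le hle (by simp)]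
  change (gaussianReal b 1).real _ - (gaussianReal a 1).real _ = _
  rw [probReal_compl_eq_one_sub measurableSet_Iic, probReal_compl_eq_one_sub measurableSet_Iic,
    gaussianReal_real_Iic, gaussianReal_real_Iic, show (a + b) / 2 - b = -((b - a) / 2) by ring,
    show (a + b) / 2 - a = (b - a) / 2 by ring, stdPhi_neg]
  ring

lemma toReal_gaussianReal_sub_gaussianReal (a b : ℝ) :
    ((gaussianReal b 1 - gaussianReal a 1) univ).toReal = 2 * stdPhi (|b - a| / 2) - 1 := by
  rcases le_total a b with hab | hba
  · rw [abs_of_nonneg (sub_nonneg.2 hab), toReal_gaussianReal_sub_gaussianReal_of_le hab]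
  · rw [Measure.sub_apply_univ_comm (by simp), abs_sub_comm, abs_of_nonneg (sub_nonneg.2 hba),
      toReal_gaussianReal_sub_gaussianReal_of_le hba]

/-- if the Gaussian means are within `2 Φ⁻¹(1/(2(1-ε)))`, the corruption
neighbourhoods intersect. -/
theorem corruption_neighbourhoods_intersect (ε mκ mη : ℝ)
    (hε : ε ∈ Set.Ioo (0 : ℝ) (1 / 2))
    (h : |mκ - mη| ≤ 2 * stdPhiInv (1 / (2 * (1 - ε)))) :
    ∃ H₁ H₂ : Measure ℝ, IsProbabilityMeasure H₁ ∧ IsProbabilityMeasure H₂ ∧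
      mix ε (gaussianReal mκ 1) H₁ = mix ε (gaussianReal mη 1) H₂ := by
  obtain ⟨hε0, hε_half⟩ := hε
  have hp : 1 / 2 < 1 / (2 * (1 - ε)) := one_div_lt_one_div_of_lt (by linarith) (by linarith)
  have hΦ : stdPhi (|mη - mκ| / 2) ≤ 1 / (2 * (1 - ε)) :=
    stdPhi_le_of_le_stdPhiInv hp (by rw [abs_sub_comm]; linarith)
  rw [le_div_iff₀ (by linarith)] at hΦ
  refine exists_smul_add_smul_eq_of_sub_univ_le hε0 ?_
  rw [toReal_gaussianReal_sub_gaussianReal]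
  nlinarith
end
end

section
/- Let κ be a distribution on ℝ that is symmetric about its median and unimodal, with CDF F_κ, and let ε ∈ (0,1/2). Then for every distribution κ' in the ε-corruption neighbourhood of κ, |Med(κ') - Med(κ)| ≤ F_κ⁻¹(1/(2(1-ε))) - Med(κ). In particular for κ = N(m,1), |Med(κ') - m| ≤ Φ⁻¹(1/(2(1-ε))). -/
open MeasureTheory ProbabilityTheory Real Set
open scoped ENNReal

noncomputable section

/-!
Put `p = 1 / (2 (1 - ε))`, `m = Med κ`, `q = F_κ⁻¹(p)` and `κ' = (1 - ε) κ + ε H`.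
Then `F_κ'(q) ≥ (1 - ε) p = 1/2`, so `Med κ' ≤ q`. Symmetry gives
`F_κ(2m - q) = 1 - F_κ(q) ≤ 1 - p`, and since the density is nondecreasing left of `m`,
`F_κ` is strictly smaller than that left of `2m - q` unless it vanishes there. Hence
`F_κ'(x) < (1 - ε)(1 - p) + ε = 1/2` for `x < 2m - q`, and `Med κ' ≥ 2m - q`.
For `N(m, 1)` the quantile function is `Φ⁻¹ + m`.
-/

namespace ProbabilityTheory

open Filter Topology

section Quantile

variable (μ : Measure ℝ) {p : ℝ}

lemma bddBelow_setOf_le_cdf (hp : 0 < p) : BddBelow {x | p ≤ cdf μ x} := by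
  obtain ⟨x₀, hx₀⟩ := ((tendsto_cdf_atBot μ).eventually (eventually_lt_nhds hp)).exists
  exact ⟨x₀, fun y hy => le_of_lt <| (monotone_cdf μ).reflect_lt (hx₀.trans_le hy)⟩

lemma nonempty_setOf_le_cdf (hp : p < 1) : {x | p ≤ cdf μ x}.Nonempty :=
  ((tendsto_cdf_atTop μ).eventually (eventually_ge_nhds hp)).exists

lemma measMed_eq_quantile : measMed μ = quantile μ (1 / 2) := rfl

variable [IsProbabilityMeasure μ]

lemma quantile_eq_sInf_cdf (p : ℝ) : quantile μ p = sInf {x | p ≤ cdf μ x} := by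
  simp only [quantile, cdf_eq_real, measureReal_def]

lemma le_cdf_quantile (hp : p < 1) : p ≤ cdf μ (quantile μ p) := by
  rw [quantile_eq_sInf_cdf]
  set q := sInf {x | p ≤ cdf μ x}
  have hright : ∀ᶠ y in 𝓝[>] q, p ≤ cdf μ y := by
    filter_upwards [self_mem_nhdsWithin] with y hy
    obtain ⟨z, hz, hzy⟩ := exists_lt_of_csInf_lt (nonempty_setOf_le_cdf μ hp) hy
    exact hz.trans (monotone_cdf μ hzy.le)
  exact ge_of_tendsto (((cdf μ).right_continuous q).mono_left
    (nhdsWithin_mono q Ioi_subset_Ici_self)) hright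

lemma quantile_le_iff (hp₀ : 0 < p) (hp₁ : p < 1) {x : ℝ} :
    quantile μ p ≤ x ↔ p ≤ cdf μ x :=
  ⟨fun h => (le_cdf_quantile μ hp₁).trans (monotone_cdf μ h),
    fun h => quantile_eq_sInf_cdf μ p ▸ csInf_le (bddBelow_setOf_le_cdf μ hp₀) h⟩

lemma le_quantile_of_forall_lt (hp₀ : 0 < p) (hp₁ : p < 1) {a : ℝ}
    (h : ∀ x < a, cdf μ x < p) : a ≤ quantile μ p :=
  le_of_not_gt fun ha => (h _ ha).not_ge ((quantile_le_iff μ hp₀ hp₁).1 le_rfl)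

lemma cdf_map_add_const (a x : ℝ) : cdf (μ.map (· + a)) x = cdf μ (x - a) := by
  have := Measure.isProbabilityMeasure_map (μ := μ) (f := (· + a)) (by fun_prop)
  rw [cdf_eq_real, cdf_eq_real, map_measureReal_apply (by fun_prop) measurableSet_Iic,
    preimage_add_const_Iic]

lemma quantile_map_add_const (hp₀ : 0 < p) (hp₁ : p < 1) (a : ℝ) :
    quantile (μ.map (· + a)) p = quantile μ p + a := by
  have := Measure.isProbabilityMeasure_map (μ := μ) (f := (· + a)) (by fun_prop)
  apply le_antisymm
  · rw [quantile_le_iff _ hp₀ hp₁, cdf_map_add_const, add_sub_cancel_right]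
    exact le_cdf_quantile μ hp₁
  · rw [← le_sub_iff_add_le, quantile_le_iff μ hp₀ hp₁, ← cdf_map_add_const]
    exact le_cdf_quantile _ hp₁

end Quantile

section Mix

variable {ε : ℝ} (μ H : Measure ℝ) [IsProbabilityMeasure μ] [IsProbabilityMeasure H]

lemma isProbabilityMeasure_mix (hε₀ : 0 ≤ ε) (hε₁ : ε ≤ 1) :
    IsProbabilityMeasure (mix ε μ H) := by
  constructor
  simp only [mix, Measure.add_apply, Measure.smul_apply, measure_univ, smul_eq_mul, mul_one]
  rw [← ENNReal.ofReal_add (by linarith) hε₀, sub_add_cancel, ENNReal.ofReal_one]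

lemma cdf_mix (hε₀ : 0 ≤ ε) (hε₁ : ε ≤ 1) (x : ℝ) :
    cdf (mix ε μ H) x = (1 - ε) * cdf μ x + ε * cdf H x := by
  have := isProbabilityMeasure_mix μ H hε₀ hε₁
  rw [cdf_eq_real, cdf_eq_real, cdf_eq_real, mix,
    measureReal_add_apply (ENNReal.mul_ne_top ENNReal.ofReal_ne_top (measure_ne_top μ _))
      (ENNReal.mul_ne_top ENNReal.ofReal_ne_top (measure_ne_top H _)),
    measureReal_ennreal_smul_apply, measureReal_ennreal_smul_apply,
    ENNReal.toReal_ofReal hε₀, ENNReal.toReal_ofReal (sub_nonneg.2 hε₁)]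

end Mix

section WithDensity

variable {f : ℝ → ℝ} {c : ℝ} {κ : Measure ℝ} [IsProbabilityMeasure κ]

lemma monotoneOn_Iic_of_symmetric_of_antitoneOn (hsym : ∀ t, f (c + t) = f (c - t))
    (hanti : AntitoneOn f (Ici c)) : MonotoneOn f (Iic c) := by
  intro a ha b hb hab
  have hc : ∀ x, f (c + (c - x)) = f x := fun x => by rw [hsym, sub_sub_cancel]
  rw [← hc a, ← hc b]
  exact hanti (by simpa using hb) (by simpa using ha) (by linarith)

lemma withDensity_Iic_two_mul_sub (hsym : ∀ t, f (c + t) = f (c - t)) (t : ℝ) :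
    volume.withDensity (fun x => ENNReal.ofReal (f x)) (Iic (2 * c - t)) =
      volume.withDensity (fun x => ENNReal.ofReal (f x)) (Ici t) := by
  rw [withDensity_apply _ measurableSet_Iic, withDensity_apply _ measurableSet_Ici,
    ← lintegral_indicator measurableSet_Iic, ← lintegral_indicator measurableSet_Ici,
    ← lintegral_sub_left_eq_self _ (2 * c)]
  refine lintegral_congr fun x => ?_
  have hreflect : f (2 * c - x) = f x := by
    simpa [two_mul, add_sub_assoc] using hsym (c - x)
  by_cases hx : t ≤ x
  · rw [indicator_of_mem (mem_Iic.2 (by linarith)),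
      indicator_of_mem (show x ∈ Ici t from hx), hreflect]
  · rw [indicator_of_notMem (fun h => hx (by linarith [mem_Iic.1 h])),
      indicator_of_notMem (show x ∉ Ici t from hx)]

lemma cdf_two_mul_sub (hκ : κ = volume.withDensity fun x => ENNReal.ofReal (f x))
    (hsym : ∀ t, f (c + t) = f (c - t)) (t : ℝ) :
    cdf κ (2 * c - t) = 1 - cdf κ t := by
  subst hκ
  rw [cdf_eq_real, cdf_eq_real, measureReal_def, withDensity_Iic_two_mul_sub hsym,
    ← compl_Iio, prob_compl_eq_one_sub measurableSet_Iio, measure_congr Iio_ae_eq_Iic,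
    ENNReal.toReal_sub_of_le prob_le_one ENNReal.one_ne_top, ENNReal.toReal_one, measureReal_def]

lemma cdf_eq_zero_or_lt_of_monotoneOn
    (hκ : κ = volume.withDensity fun x => ENNReal.ofReal (f x)) {x y : ℝ}
    (hmono : MonotoneOn f (Iic y)) (hxy : x < y) :
    cdf κ x = 0 ∨ cdf κ x < cdf κ y := by
  by_cases hfx : f x ≤ 0
  · left
    have hzero : κ (Iic x) = 0 := by
      rw [hκ, withDensity_apply _ measurableSet_Iic]
      refine (setLIntegral_congr_fun measurableSet_Iic fun z hz => ?_).trans lintegral_zero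
      exact ENNReal.ofReal_eq_zero.2
        ((hmono (mem_Iic.2 (hz.trans hxy.le)) (mem_Iic.2 hxy.le) hz).trans hfx)
    rw [cdf_eq_real, measureReal_def, hzero, ENNReal.toReal_zero]
  · right
    have hpos : 0 < κ (Ioc x y) := by
      rw [hκ, withDensity_apply _ measurableSet_Ioc]
      calc 0 < ENNReal.ofReal (f x) * volume (Ioc x y) := by
            simp [Real.volume_Ioc, not_le.1 hfx, hxy]
        _ = ∫⁻ _ in Ioc x y, ENNReal.ofReal (f x) := (setLIntegral_const _ _).symm
        _ ≤ ∫⁻ z in Ioc x y, ENNReal.ofReal (f z) :=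
            setLIntegral_mono' measurableSet_Ioc fun z hz =>
              ENNReal.ofReal_le_ofReal (hmono (mem_Iic.2 hxy.le) (mem_Iic.2 hz.2) hz.1.le)
    rw [← measure_cdf κ, StieltjesFunction.measure_Ioc, ENNReal.ofReal_pos] at hpos
    linarith

theorem abs_measMed_mix_sub_le {ε : ℝ} (hε : ε ∈ Ioo (0 : ℝ) (1 / 2))
    (hκ : κ = volume.withDensity fun x => ENNReal.ofReal (f x))
    (hsym : ∀ t, f (c + t) = f (c - t)) (hanti : AntitoneOn f (Ici c))
    (H : Measure ℝ) [IsProbabilityMeasure H] :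
    |measMed (mix ε κ H) - c| ≤ quantile κ (1 / (2 * (1 - ε))) - c := by
  set ν := mix ε κ H
  obtain ⟨hε₀, hε₁⟩ := hε
  have := isProbabilityMeasure_mix κ H hε₀.le (by linarith)
  set p := 1 / (2 * (1 - ε))
  have hmass : (1 - ε) * p = 1 / 2 := by
    simp only [p]; field_simp [show 1 - ε ≠ 0 by linarith]
  have hp_half : 1 / 2 < p := by
    rw [lt_div_iff₀ (by linarith)]; linarith
  have hp_one : p < 1 := by rw [div_lt_one (by linarith)]; linarith
  set q := quantile κ p
  have hq : p ≤ cdf κ q := le_cdf_quantile κ hp_one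
  have hcdf_c : cdf κ c = 1 / 2 := by
    have h := cdf_two_mul_sub hκ hsym c
    rw [show 2 * c - c = c by ring] at h
    linarith
  have hcq : c ≤ q := ((monotone_cdf κ).reflect_lt (hcdf_c.trans_lt (hp_half.trans_le hq))).le
  have hupper : quantile ν (1 / 2) ≤ q := by
    refine (quantile_le_iff ν (by norm_num) (by norm_num)).2 ?_
    rw [cdf_mix κ H hε₀.le (by linarith)]
    nlinarith [cdf_nonneg H q]
  have hlower : 2 * c - q ≤ quantile ν (1 / 2) := by
    refine le_quantile_of_forall_lt ν (by norm_num) (by norm_num) fun x hx => ?_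
    have hreflect : cdf κ (2 * c - q) ≤ 1 - p := by rw [cdf_two_mul_sub hκ hsym]; linarith
    have hx_lt : cdf κ x < 1 - p := by
      have hmono := (monotoneOn_Iic_of_symmetric_of_antitoneOn hsym hanti).mono
        (Iic_subset_Iic.2 (show 2 * c - q ≤ c by linarith))
      rcases cdf_eq_zero_or_lt_of_monotoneOn hκ hmono hx with h | h <;> linarith
    rw [cdf_mix κ H hε₀.le (by linarith)]
    nlinarith [cdf_le_one H x]
  rw [measMed_eq_quantile, abs_le]
  constructor <;> linarith

end WithDensity

lemma gaussianPDFReal_add_eq_sub (m t : ℝ) :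
    gaussianPDFReal m 1 (m + t) = gaussianPDFReal m 1 (m - t) := by
  simp only [gaussianPDFReal]
  ring_nf

lemma antitoneOn_gaussianPDFReal (m : ℝ) : AntitoneOn (gaussianPDFReal m 1) (Ici m) := by
  intro s hs t ht hst
  simp only [gaussianPDFReal, NNReal.coe_one, mul_one]
  gcongr
  nlinarith [mem_Ici.1 hs]

lemma quantile_gaussianReal (m : ℝ) {p : ℝ} (hp₀ : 0 < p) (hp₁ : p < 1) :
    quantile (gaussianReal m 1) p = stdPhiInv p + m := by
  have hshift := gaussianReal_map_add_const (μ := 0) (v := 1) m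
  rw [zero_add] at hshift
  rw [← hshift, quantile_map_add_const _ hp₀ hp₁]
  rfl

end ProbabilityTheory

/-- bias of the median over a corruption neighbourhood of a symmetric
unimodal distribution, and the Gaussian special case. -/
theorem median_bias_corruption_neighbourhood (ε : ℝ) (hε : ε ∈ Set.Ioo (0 : ℝ) (1 / 2)) :
    (∀ (f : ℝ → ℝ) (κ : Measure ℝ),
      κ = MeasureTheory.volume.withDensity (fun x => ENNReal.ofReal (f x)) →
      IsProbabilityMeasure κ →
      (∀ t : ℝ, f (measMed κ + t) = f (measMed κ - t)) →
      (∀ s t : ℝ, measMed κ ≤ s → s ≤ t → f t ≤ f s) →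
      ∀ H : Measure ℝ, IsProbabilityMeasure H →
        |measMed (mix ε κ H) - measMed κ| ≤
          quantile κ (1 / (2 * (1 - ε))) - measMed κ) ∧
    (∀ (m : ℝ) (H : Measure ℝ), IsProbabilityMeasure H →
      |measMed (mix ε (gaussianReal m 1) H) - m| ≤ stdPhiInv (1 / (2 * (1 - ε)))) := by
  refine ⟨fun f κ hκ _ hsym hanti H _ => ?_, fun m H _ => ?_⟩
  · exact abs_measMed_mix_sub_le hε hκ hsym (fun s hs t _ hst => hanti s t hs hst) H
  · have hp₀ : 0 < 1 / (2 * (1 - ε)) := div_pos one_pos (by linarith [hε.2])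
    have hp₁ : 1 / (2 * (1 - ε)) < 1 := by rw [div_lt_one] <;> linarith [hε.1, hε.2]
    have hbias := abs_measMed_mix_sub_le hε (gaussianReal_of_var_ne_zero m one_ne_zero)
      (gaussianPDFReal_add_eq_sub m) (antitoneOn_gaussianPDFReal m) H
    rwa [quantile_gaussianReal m hp₀ hp₁, add_sub_cancel_right] at hbias
end
end

section
/- Let ε ∈ (0,1/2), let η, κ be probability distributions on ℝ, and let H₁, H₂ be the optimal corruption pair defined implicitly by: d(η ⊙_ε H₁)(x) = (1-ε)·dη(x) if (dη/dκ)(x) ≥ c₁ and = c₁(1-ε)·dκ(x) otherwise; and d(κ ⊙_ε H₂)(x) = (1-ε)·dκ(x) if (dη/dκ)(x) ≤ 1/c₂ and = c₂(1-ε)·dη(x) otherwise, with c₁, c₂ normalisation constants satisfying 0 ≤ c₂ ≤ 1/c₁. Then (H₁, H₂) minimizes KL(η ⊙_ε H, κ ⊙_ε H') over all pairs of probability distributions (H, H') on ℝ. -/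
/-!
With `ν = η + κ`, the two Huber densities differ exactly by the factor `R`, the likelihood
ratio `dη/dκ` clipped to `[c₁, 1/c₂]`, so `R = d(η ⊙_ε H₁)/d(κ ⊙_ε H₂)`. Moreover `H₁` lives
where the clipping is active from below (`R = c₁`) and `H₂` where it is active from above
(`R = 1/c₂`); as `ε > 0`, this also forces `c₁, c₂ > 0`. Hence for any corruptions `H, H'`,
`KL(η ⊙_ε H₁, κ ⊙_ε H₂) = ∫ log R d(η ⊙_ε H₁) ≤ ∫ log R d(η ⊙_ε H)` because `log R ≥ log c₁`,
and `∫ R d(κ ⊙_ε H') ≤ ∫ R d(κ ⊙_ε H₂) = 1` because `R ≤ 1/c₂`. The Donsker–Varadhan bound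
`∫ log R dP ≤ KL(P, Q) + log ∫ R dQ` finishes the proof.
-/

open MeasureTheory ProbabilityTheory Real Set
open scoped ENNReal

noncomputable section

section Gibbs

variable {α : Type*} [MeasurableSpace α] {P Q : Measure α}

theorem integral_le_integral_llr_of_integral_exp_le_one [IsProbabilityMeasure P]
    [IsFiniteMeasure Q] (hPQ : P ≪ Q) (hllr : Integrable (llr P Q) P) {f : α → ℝ}
    (hfP : Integrable f P) (hfQ : Integrable (fun x => exp (f x)) Q)
    (hexp : ∫ x, exp (f x) ∂Q ≤ 1) :
    ∫ x, f x ∂P ≤ ∫ x, llr P Q x ∂P := by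
  have : NeZero Q := ⟨fun hQ => IsProbabilityMeasure.ne_zero P
    (Measure.absolutelyContinuous_zero_iff.mp (hQ ▸ hPQ))⟩
  have := isProbabilityMeasure_tilted hfQ
  -- Gibbs' inequality for `P` against the tilted measure `Q.tilted f`.
  have hgibbs := InformationTheory.integral_llr_add_sub_measure_univ_nonneg
    (hPQ.trans (absolutelyContinuous_tilted hfQ)) (integrable_llr_tilted_right hPQ hfP hllr hfQ)
  rw [integral_llr_tilted_right hPQ hfP hfQ hllr, probReal_univ, probReal_univ] at hgibbs
  have hlog : log (∫ x, exp (f x) ∂Q) ≤ 0 :=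
    log_nonpos (integral_nonneg fun x => (exp_pos _).le) hexp
  linarith

end Gibbs

theorem integrable_of_forall_mem_Icc {α : Type*} [MeasurableSpace α] {μ : Measure α}
    [IsFiniteMeasure μ] {f : α → ℝ} {a b : ℝ} (hf : Measurable f) (hab : ∀ x, f x ∈ Icc a b) :
    Integrable f μ :=
  Integrable.of_bound hf.aestronglyMeasurable (max |a| |b|)
    (ae_of_all _ fun x => abs_le_max_abs_abs (hab x).1 (hab x).2)

theorem ofReal_integral_le_KLdiv {P Q : Measure ℝ} [IsProbabilityMeasure P] [IsFiniteMeasure Q]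
    {f : ℝ → ℝ} (hfP : Integrable f P) (hfQ : Integrable (fun x => exp (f x)) Q)
    (hexp : ∫ x, exp (f x) ∂Q ≤ 1) :
    ENNReal.ofReal (∫ x, f x ∂P) ≤ KLdiv P Q := by
  unfold KLdiv
  split_ifs with h
  · exact ENNReal.ofReal_le_ofReal
      (integral_le_integral_llr_of_integral_exp_le_one h.1 h.2 hfP hfQ hexp)
  · exact le_top

theorem KLdiv_withDensity {Q : Measure ℝ} [SigmaFinite Q] {r : ℝ → ℝ≥0∞} (hr : Measurable r)
    (hint : Integrable (fun x => log (r x).toReal) (Q.withDensity r)) :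
    KLdiv (Q.withDensity r) Q = ENNReal.ofReal (∫ x, log (r x).toReal ∂(Q.withDensity r)) := by
  have hlog : (fun x => log ((Q.withDensity r).rnDeriv Q x).toReal)
      =ᵐ[Q.withDensity r] fun x => log (r x).toReal :=
    ((withDensity_absolutelyContinuous Q r).ae_eq (Measure.rnDeriv_withDensity Q hr)).fun_comp
      fun t => log t.toReal
  unfold KLdiv
  rw [if_pos ⟨withDensity_absolutelyContinuous Q r, hint.congr hlog.symm⟩,
    integral_congr_ae hlog]

section Mixture

variable {ε : ℝ} {μ H : Measure ℝ}

instance [IsFiniteMeasure μ] [IsFiniteMeasure H] : IsFiniteMeasure (mix ε μ H) :=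
  ⟨by simp [mix, ENNReal.mul_lt_top, measure_lt_top]⟩

theorem isProbabilityMeasure_mix (hε : ε ∈ Icc 0 1) [IsProbabilityMeasure μ]
    [IsProbabilityMeasure H] : IsProbabilityMeasure (mix ε μ H) := by
  constructor
  simp only [mix, Measure.add_apply, Measure.smul_apply, measure_univ, smul_eq_mul, mul_one]
  rw [← ENNReal.ofReal_add (by linarith [hε.2]) hε.1, sub_add_cancel, ENNReal.ofReal_one]

theorem integral_mix_le_integral_mix [IsFiniteMeasure μ] {H₀ : Measure ℝ}
    [IsProbabilityMeasure H₀] [IsProbabilityMeasure H] {φ : ℝ → ℝ} {m : ℝ}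
    (hμ : Integrable φ μ) (hH₀ : Integrable φ H₀) (hH : Integrable φ H)
    (hle : ∀ᵐ x ∂H₀, φ x ≤ m) (hge : ∀ᵐ x ∂H, m ≤ φ x) :
    ∫ x, φ x ∂(mix ε μ H₀) ≤ ∫ x, φ x ∂(mix ε μ H) := by
  have hH₀H : ∫ x, φ x ∂H₀ ≤ ∫ x, φ x ∂H := by
    calc ∫ x, φ x ∂H₀ ≤ ∫ _, m ∂H₀ := integral_mono_ae hH₀ (integrable_const m) hle
      _ = ∫ _, m ∂H := by simp
      _ ≤ ∫ x, φ x ∂H := integral_mono_ae (integrable_const m) hH hge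
  simp only [mix]
  rw [integral_add_measure (hμ.smul_measure ENNReal.ofReal_ne_top)
      (hH₀.smul_measure ENNReal.ofReal_ne_top),
    integral_add_measure (hμ.smul_measure ENNReal.ofReal_ne_top)
      (hH.smul_measure ENNReal.ofReal_ne_top), integral_smul_measure, integral_smul_measure,
    integral_smul_measure]
  gcongr

end Mixture

def clip (lo hi u : ℝ≥0∞) : ℝ≥0∞ := max lo (min hi u)

section Clip

variable {lo hi u v : ℝ≥0∞}

theorem clip_mem_Icc (h : lo ≤ hi) : clip lo hi u ∈ Icc lo hi :=
  ⟨le_max_left _ _, max_le h (min_le_left _ _)⟩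

theorem clip_of_mem_Icc (hu : u ∈ Icc lo hi) : clip lo hi u = u := by
  rw [clip, min_eq_right hu.2, max_eq_right hu.1]

theorem clip_div_of_lt_mul (huv : u < lo * v) : clip lo hi (u / v) = lo :=
  max_eq_left ((min_le_right _ _).trans (ENNReal.div_lt_of_lt_mul huv).le)

theorem clip_div_of_lt_mul_inv {C : ℝ≥0∞} (h : lo ≤ C⁻¹) (huv : v < C * u) :
    clip lo C⁻¹ (u / v) = C⁻¹ := by
  have hu0 : u ≠ 0 := by rintro rfl; simp at huv
  have hle : C⁻¹ ≤ u / v := by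
    rw [ENNReal.le_div_iff_mul_le (Or.inr hu0) (Or.inl huv.ne_top), mul_comm]
    calc v * C⁻¹ ≤ C * u * C⁻¹ := by gcongr
      _ = C⁻¹ * C * u := by ring
      _ ≤ u := mul_le_of_le_one_left' (ENNReal.inv_mul_le_one C)
  rw [clip, min_eq_left hle, max_eq_right h]

-- `u / v` plays the role of `dη/dκ`: in `ℝ≥0∞`, `u / 0 = ⊤` for `u ≠ 0` and `0 / 0 = 0`.
theorem max_mul_eq_clip_mul_max {C₁ C₂ : ℝ≥0∞} (hC : C₁ * C₂ ≤ 1) (hC₂ : C₂ ≠ 0)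
    (hC₂' : C₂ ≠ ⊤) (hv : v ≠ ⊤) :
    max u (C₁ * v) = clip C₁ C₂⁻¹ (u / v) * max v (C₂ * u) := by
  have hC₁ : C₁ ≤ C₂⁻¹ := ENNReal.le_inv_iff_mul_le.mpr hC
  rcases lt_or_ge u (C₁ * v) with hlt | hge₁
  · have hmax : C₂ * u ≤ v := calc
      C₂ * u ≤ C₂ * (C₁ * v) := by gcongr
      _ = C₁ * C₂ * v := by ring
      _ ≤ v := mul_le_of_le_one_left' hC
    rw [max_eq_right hlt.le, clip_div_of_lt_mul hlt, max_eq_left hmax]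
  rcases lt_or_ge v (C₂ * u) with hlt | hge₂
  · rw [max_eq_left hge₁, clip_div_of_lt_mul_inv hC₁ hlt, max_eq_right hlt.le, ← mul_assoc,
      ENNReal.inv_mul_cancel hC₂ hC₂', one_mul]
  rw [max_eq_left hge₁, max_eq_left hge₂]
  rcases eq_or_ne v 0 with rfl | hv0
  · simpa [hC₂] using hge₂
  have hmem : u / v ∈ Icc C₁ C₂⁻¹ := by
    constructor
    · rwa [ENNReal.le_div_iff_mul_le (Or.inl hv0) (Or.inl hv)]
    · rw [ENNReal.div_le_iff_le_mul (Or.inl hv0) (Or.inl hv)]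
      calc u = C₂⁻¹ * (C₂ * u) := by rw [← mul_assoc, ENNReal.inv_mul_cancel hC₂ hC₂', one_mul]
        _ ≤ C₂⁻¹ * v := by gcongr
  rw [clip_of_mem_Icc hmem, ENNReal.div_mul_cancel hv0 hv]

end Clip

section Huber

variable {ν : Measure ℝ} {F G : ℝ → ℝ≥0∞}

theorem withDensity_max_mul_eq_add (hF : Measurable F) (C : ℝ≥0∞) :
    ν.withDensity (fun x => max (F x) (C * G x)) =
      ν.withDensity F + ν.withDensity (fun x => C * G x - F x) := by
  rw [← withDensity_add_left hF]
  exact congrArg _ (funext fun x => add_tsub_eq_max.symm)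

theorem ae_lt_mul_of_mix_eq_withDensity {ε : ℝ} (hε : 0 < ε) {μ H : Measure ℝ}
    [IsFiniteMeasure μ] (hF : Measurable F) (hG : Measurable G) (hμ : ν.withDensity F = μ)
    {C : ℝ≥0∞}
    (hmix : mix ε μ H = ν.withDensity fun x => ENNReal.ofReal (1 - ε) * max (F x) (C * G x)) :
    ∀ᵐ x ∂H, F x < C * G x := by
  set a := ENNReal.ofReal (1 - ε)
  have hsplit : (ν.withDensity fun x => a * max (F x) (C * G x)) =
      a • μ + a • ν.withDensity (fun x => C * G x - F x) := by
    rw [← smul_add, ← hμ, ← withDensity_max_mul_eq_add hF, ← withDensity_smul _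
      (hF.max (hG.const_mul C))]
    rfl
  have hH : ENNReal.ofReal ε • H = a • ν.withDensity (fun x => C * G x - F x) := by
    rw [hsplit, mix] at hmix
    refine Measure.ext fun s _ => (ENNReal.add_right_inj ?_).mp congr($hmix s)
    exact ENNReal.mul_ne_top ENNReal.ofReal_ne_top (measure_ne_top μ s)
  have hexcess : ∀ᵐ x ∂(ENNReal.ofReal ε • H), F x < C * G x := by
    rw [hH]
    refine Measure.smul_absolutelyContinuous.ae_le ?_
    exact (ae_withDensity_iff (f := fun x => C * G x - F x) ((hG.const_mul C).sub hF)).mpr <|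
      ae_of_all _ fun x hx => tsub_pos_iff_lt.mp (pos_iff_ne_zero.mpr hx)
  exact (Measure.ae_ennreal_smul_measure_iff (ENNReal.ofReal_pos.mpr hε).ne').mp hexcess

theorem pos_of_ae_lt_ofReal_mul {H : Measure ℝ} [NeZero H] {c : ℝ}
    (h : ∀ᵐ x ∂H, F x < ENNReal.ofReal c * G x) : 0 < c := by
  by_contra hc
  have hfalse : ∀ᵐ _ ∂H, False :=
    h.mono fun x hx => by simp [ENNReal.ofReal_of_nonpos (not_lt.mp hc)] at hx
  exact NeZero.ne H (ae_eq_bot.mp (Filter.eventually_false_iff_eq_bot.mp hfalse))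

end Huber

theorem KLdiv_mix_le_of_clipped_ratio {ε : ℝ} (hε : ε ∈ Icc 0 1) {η κ H₁ H₂ : Measure ℝ}
    [IsProbabilityMeasure η] [IsProbabilityMeasure κ] [IsProbabilityMeasure H₁]
    [IsProbabilityMeasure H₂] {R : ℝ → ℝ} {lo hi : ℝ} (hR : Measurable R) (hlo : 0 < lo)
    (hR_mem : ∀ x, R x ∈ Icc lo hi) (hH₁ : ∀ᵐ x ∂H₁, R x = lo) (hH₂ : ∀ᵐ x ∂H₂, R x = hi)
    (hratio : mix ε η H₁ = (mix ε κ H₂).withDensity fun x => ENNReal.ofReal (R x))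
    (H H' : Measure ℝ) [IsProbabilityMeasure H] [IsProbabilityMeasure H'] :
    KLdiv (mix ε η H₁) (mix ε κ H₂) ≤ KLdiv (mix ε η H) (mix ε κ H') := by
  have := isProbabilityMeasure_mix hε (μ := η) (H := H₁)
  have := isProbabilityMeasure_mix hε (μ := η) (H := H)
  have hR_pos : ∀ x, 0 < R x := fun x => hlo.trans_le (hR_mem x).1
  have hR_int : ∀ (μ : Measure ℝ) [IsFiniteMeasure μ], Integrable R μ :=
    fun _ _ => integrable_of_forall_mem_Icc hR hR_mem
  have hlogR_int : ∀ (μ : Measure ℝ) [IsFiniteMeasure μ], Integrable (fun x => log (R x)) μ :=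
    fun _ _ => integrable_of_forall_mem_Icc hR.log fun x =>
      ⟨log_le_log hlo (hR_mem x).1, log_le_log (hR_pos x) (hR_mem x).2⟩
  have hKL₀ : KLdiv (mix ε η H₁) (mix ε κ H₂) =
      ENNReal.ofReal (∫ x, log (R x) ∂(mix ε η H₁)) := by
    have h := KLdiv_withDensity (Q := mix ε κ H₂) hR.ennreal_ofReal
      (by simpa only [ENNReal.toReal_ofReal (hR_pos _).le, ← hratio] using hlogR_int _)
    simpa only [← hratio, ENNReal.toReal_ofReal (hR_pos _).le] using h
  have hQ₀ : ∫ x, R x ∂(mix ε κ H₂) = 1 := by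
    rw [integral_eq_lintegral_of_nonneg_ae (ae_of_all _ fun x => (hR_pos x).le)
      hR.aestronglyMeasurable, ← setLIntegral_univ, ← withDensity_apply _ MeasurableSet.univ,
      ← hratio, measure_univ, ENNReal.toReal_one]
  have hP : ∫ x, log (R x) ∂(mix ε η H₁) ≤ ∫ x, log (R x) ∂(mix ε η H) :=
    integral_mix_le_integral_mix (hlogR_int η) (hlogR_int H₁) (hlogR_int H)
      (hH₁.mono fun x hx => by rw [hx]) (ae_of_all _ fun x => log_le_log hlo (hR_mem x).1)
  have hQ : ∫ x, exp (log (R x)) ∂(mix ε κ H') ≤ 1 := by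
    simp_rw [exp_log (hR_pos _)]
    exact hQ₀ ▸ integral_mix_le_integral_mix (hR_int κ) (hR_int H') (hR_int H₂)
      (ae_of_all _ fun x => (hR_mem x).2) (hH₂.mono fun x hx => hx.ge)
  calc KLdiv (mix ε η H₁) (mix ε κ H₂) = ENNReal.ofReal (∫ x, log (R x) ∂(mix ε η H₁)) := hKL₀
    _ ≤ ENNReal.ofReal (∫ x, log (R x) ∂(mix ε η H)) := ENNReal.ofReal_le_ofReal hP
    _ ≤ KLdiv (mix ε η H) (mix ε κ H') :=
      ofReal_integral_le_KLdiv (hlogR_int _)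
        (by simpa only [exp_log (hR_pos _)] using hR_int _) hQ

theorem KLdiv_mix_le_of_huber {ε : ℝ} (hε : ε ∈ Ioo 0 1) {ν η κ H₁ H₂ : Measure ℝ}
    [IsProbabilityMeasure η] [IsProbabilityMeasure κ] [IsProbabilityMeasure H₁]
    [IsProbabilityMeasure H₂] {F G : ℝ → ℝ≥0∞} (hF : Measurable F) (hG : Measurable G)
    (hG_top : ∀ᵐ x ∂ν, G x ≠ ⊤) (hη : ν.withDensity F = η)
    (hκ : ν.withDensity G = κ) {c₁ c₂ : ℝ} (hcc : c₁ * c₂ ≤ 1)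
    (hmix₁ : mix ε η H₁ = ν.withDensity fun x =>
      ENNReal.ofReal (1 - ε) * max (F x) (ENNReal.ofReal c₁ * G x))
    (hmix₂ : mix ε κ H₂ = ν.withDensity fun x =>
      ENNReal.ofReal (1 - ε) * max (G x) (ENNReal.ofReal c₂ * F x))
    (H H' : Measure ℝ) [IsProbabilityMeasure H] [IsProbabilityMeasure H'] :
    KLdiv (mix ε η H₁) (mix ε κ H₂) ≤ KLdiv (mix ε η H) (mix ε κ H') := by
  have hlt₁ := ae_lt_mul_of_mix_eq_withDensity hε.1 hF hG hη hmix₁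
  have hlt₂ := ae_lt_mul_of_mix_eq_withDensity hε.1 hG hF hκ hmix₂
  have hc₁ := pos_of_ae_lt_ofReal_mul hlt₁
  have hc₂ := pos_of_ae_lt_ofReal_mul hlt₂
  have hC : ENNReal.ofReal c₁ * ENNReal.ofReal c₂ ≤ 1 := by
    rw [← ENNReal.ofReal_mul hc₁.le]
    exact ENNReal.ofReal_le_one.mpr hcc
  have hlohi : ENNReal.ofReal c₁ ≤ (ENNReal.ofReal c₂)⁻¹ := ENNReal.le_inv_iff_mul_le.mpr hC
  have hhi : (ENNReal.ofReal c₂)⁻¹ = ENNReal.ofReal c₂⁻¹ := (ENNReal.ofReal_inv_of_pos hc₂).symm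
  set r := fun x => clip (ENNReal.ofReal c₁) (ENNReal.ofReal c₂)⁻¹ (F x / G x)
  have hr_mem : ∀ x, r x ∈ Icc (ENNReal.ofReal c₁) (ENNReal.ofReal c₂⁻¹) :=
    fun x => hhi ▸ clip_mem_Icc hlohi
  have hr_top : ∀ x, r x ≠ ⊤ := fun x => ne_top_of_le_ne_top ENNReal.ofReal_ne_top (hr_mem x).2
  have hr : Measurable r := measurable_const.max (measurable_const.min (hF.div hG))
  refine KLdiv_mix_le_of_clipped_ratio (Ioo_subset_Icc_self hε) (R := fun x => (r x).toReal)
    (hi := c₂⁻¹) hr.ennreal_toReal hc₁ (fun x => ⟨?_, ?_⟩) ?_ ?_ ?_ H H'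
  · simpa only [ENNReal.toReal_ofReal hc₁.le] using ENNReal.toReal_mono (hr_top x) (hr_mem x).1
  · simpa only [ENNReal.toReal_ofReal (inv_nonneg.mpr hc₂.le)] using
      ENNReal.toReal_mono ENNReal.ofReal_ne_top (hr_mem x).2
  · exact hlt₁.mono fun x hx => by
      simp only [r, clip_div_of_lt_mul hx, ENNReal.toReal_ofReal hc₁.le]
  · exact hlt₂.mono fun x hx => by
      simp only [r]
      rw [clip_div_of_lt_mul_inv hlohi hx, hhi, ENNReal.toReal_ofReal (inv_nonneg.mpr hc₂.le)]
  · rw [hmix₁, hmix₂, ← withDensity_mul ν ((hG.max (hF.const_mul _)).const_mul _)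
      hr.ennreal_toReal.ennreal_ofReal]
    refine withDensity_congr_ae ?_
    filter_upwards [hG_top] with x hGx
    rw [Pi.mul_apply, ENNReal.ofReal_toReal (hr_top x), max_mul_eq_clip_mul_max hC
      (ENNReal.ofReal_pos.mpr hc₂).ne' ENNReal.ofReal_ne_top hGx]
    ring

theorem huber_pair_optimal_general (ε : ℝ) (hε : ε ∈ Set.Ioo (0 : ℝ) (1 / 2))
    (η κ H₁ H₂ : Measure ℝ) (c₁ c₂ : ℝ)
    (hη : IsProbabilityMeasure η) (hκ : IsProbabilityMeasure κ)
    (hH₁ : IsProbabilityMeasure H₁) (hH₂ : IsProbabilityMeasure H₂)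
    (hcc : c₁ * c₂ ≤ 1)
    (hmix₁ : mix ε η H₁ =
      (η + κ).withDensity (fun x =>
        if ENNReal.ofReal c₁ * κ.rnDeriv (η + κ) x ≤ η.rnDeriv (η + κ) x then
          ENNReal.ofReal (1 - ε) * η.rnDeriv (η + κ) x
        else ENNReal.ofReal (c₁ * (1 - ε)) * κ.rnDeriv (η + κ) x))
    (hmix₂ : mix ε κ H₂ =
      (η + κ).withDensity (fun x =>
        if ENNReal.ofReal c₂ * η.rnDeriv (η + κ) x ≤ κ.rnDeriv (η + κ) x then
          ENNReal.ofReal (1 - ε) * κ.rnDeriv (η + κ) x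
        else ENNReal.ofReal (c₂ * (1 - ε)) * η.rnDeriv (η + κ) x)) :
    ∀ H H' : Measure ℝ, IsProbabilityMeasure H → IsProbabilityMeasure H' →
      KLdiv (mix ε η H₁) (mix ε κ H₂) ≤ KLdiv (mix ε η H) (mix ε κ H') := by
  intro H H' _ _
  have hε' : ε ∈ Ioo 0 1 := ⟨hε.1, by linarith [hε.2]⟩
  have hite : ∀ (c : ℝ) (u v : ℝ≥0∞),
      (if ENNReal.ofReal c * v ≤ u then ENNReal.ofReal (1 - ε) * u
        else ENNReal.ofReal (c * (1 - ε)) * v) =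
      ENNReal.ofReal (1 - ε) * max u (ENNReal.ofReal c * v) := by
    intro c u v
    split_ifs with h
    · rw [max_eq_left h]
    · rw [max_eq_right (not_le.mp h).le, ENNReal.ofReal_mul' (by linarith [hε'.2])]
      ring
  simp only [hite] at hmix₁ hmix₂
  exact KLdiv_mix_le_of_huber hε' (Measure.measurable_rnDeriv _ _)
    (Measure.measurable_rnDeriv _ _) (Measure.rnDeriv_ne_top _ _)
    (Measure.withDensity_rnDeriv_eq _ _ (Measure.AbsolutelyContinuous.rfl.add_right κ))
    (Measure.withDensity_rnDeriv_eq _ _ (Measure.absolutelyContinuous_of_le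
      (Measure.le_add_left le_rfl))) hcc hmix₁ hmix₂ H H'

/-- optimality of the Huber corruption pair `(H₁, H₂)`. -/
theorem huber_pair_optimal (ε : ℝ) (hε : ε ∈ Set.Ioo (0 : ℝ) (1 / 2))
    (η κ H₁ H₂ : Measure ℝ) (c₁ c₂ : ℝ)
    (hη : IsProbabilityMeasure η) (hκ : IsProbabilityMeasure κ)
    (hH₁ : IsProbabilityMeasure H₁) (hH₂ : IsProbabilityMeasure H₂)
    (hc₁ : 0 ≤ c₁) (hc₂ : 0 ≤ c₂) (hcc : c₁ * c₂ ≤ 1)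
    (hmix₁ : mix ε η H₁ =
      (η + κ).withDensity (fun x =>
        if ENNReal.ofReal c₁ * κ.rnDeriv (η + κ) x ≤ η.rnDeriv (η + κ) x then
          ENNReal.ofReal (1 - ε) * η.rnDeriv (η + κ) x
        else ENNReal.ofReal (c₁ * (1 - ε)) * κ.rnDeriv (η + κ) x))
    (hmix₂ : mix ε κ H₂ =
      (η + κ).withDensity (fun x =>
        if ENNReal.ofReal c₂ * η.rnDeriv (η + κ) x ≤ κ.rnDeriv (η + κ) x then
          ENNReal.ofReal (1 - ε) * κ.rnDeriv (η + κ) x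
        else ENNReal.ofReal (c₂ * (1 - ε)) * η.rnDeriv (η + κ) x)) :
    ∀ H H' : Measure ℝ, IsProbabilityMeasure H → IsProbabilityMeasure H' →
      KLdiv (mix ε η H₁) (mix ε κ H₂) ≤ KLdiv (mix ε η H) (mix ε κ H') :=
  huber_pair_optimal_general ε hε η κ H₁ H₂ c₁ c₂ hη hκ hH₁ hH₂ hcc hmix₁ hmix₂
end
end
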